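/- Let K be a field of characteristic 2, let a, b ∈ K be nonzero with a ≠ b, let N be an even positive integer, and let P be an orthogonal binary N×N matrix (P Pᵀ = I over F₂). If H is a binary R×N matrix whose rank over K is R, then the matrix H (P_{a,b})ᵀ (product over K) also has rank R over K. -/

import Mathlib

/-!
Write `Q = P_{a,b}` as `a J + (b - a) P`, with `J` the all-ones matrix. The diagonal of `P Pᵀ = I`
says that every row of `P` has odd weight, so `P J = J`; hence
`Q Qᵀ = (N a² + 2 a (b - a)) J + (b - a)² I`, which is `(b - a)² I` in characteristic `2` for even
`N`. So `Q` is invertible when `a ≠ b`, and multiplying on the right by `Qᵀ` preserves rank.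
-/

/-- For a binary matrix `P` and elements `a b` of `K`, `binSub a b P` is the matrix `P_{a,b}`
whose `(i,j)` entry is `a` if `P i j = 0` and `b` if `P i j = 1`. -/
def binSub {K : Type*} [Field K] {R N : ℕ} (a b : K)
    (P : Matrix (Fin R) (Fin N) (ZMod 2)) : Matrix (Fin R) (Fin N) K :=
  Matrix.of fun i j => if P i j = 0 then a else b

open Matrix

lemma ZMod.mul_self_two (x : ZMod 2) : x * x = x := by
  fin_cases x <;> rfl

lemma ZMod.sum_row_eq_one_of_mul_transpose_eq_one {n : Type*} [Fintype n] [DecidableEq n]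
    {P : Matrix n n (ZMod 2)} (hP : P * Pᵀ = 1) (i : n) : ∑ k, P i k = 1 := by
  simpa [mul_apply, ZMod.mul_self_two] using congr_fun₂ hP i i

lemma gram_const_add_smul {n K : Type*} [Fintype n] [DecidableEq n] [CommRing K]
    (a c : K) {M : Matrix n n K} (hM : M * Mᵀ = 1) (hrow : ∀ i, ∑ k, M i k = 1) :
    (of fun i j => a + c * M i j) * (of fun i j => a + c * M i j)ᵀ =
      (Fintype.card n * a ^ 2 + 2 * a * c) • of (fun _ _ => 1) + c ^ 2 • (1 : Matrix n n K) := by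
  ext i j
  have hij : ∑ k, M i k * M j k = (1 : Matrix n n K) i j := by
    simpa [mul_apply] using congr_fun₂ hM i j
  simp only [mul_apply, transpose_apply, of_apply, Matrix.add_apply, Matrix.smul_apply,
    smul_eq_mul]
  calc ∑ k, (a + c * M i k) * (a + c * M j k)
      = ∑ k, (a ^ 2 + a * c * M j k + a * c * M i k + c ^ 2 * (M i k * M j k)) := by
        congr! 1 with k; ring
    _ = Fintype.card n * a ^ 2 + a * c * ∑ k, M j k + a * c * ∑ k, M i k
          + c ^ 2 * ∑ k, M i k * M j k := by
        simp only [Finset.sum_add_distrib, ← Finset.mul_sum, Finset.sum_const, Finset.card_univ,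
          nsmul_eq_mul]
    _ = _ := by rw [hrow, hrow, hij]; ring

lemma binSub_apply {K : Type*} [Field K] [CharP K 2] {R N : ℕ} (a b : K)
    (P : Matrix (Fin R) (Fin N) (ZMod 2)) (i : Fin R) (j : Fin N) :
    binSub a b P i j = a + (b - a) * ZMod.castHom (dvd_refl 2) K (P i j) := by
  rcases (by decide : ∀ x : ZMod 2, x = 0 ∨ x = 1) (P i j) with h | h <;>
    simp [binSub, h]

lemma binSub_mul_transpose_self {K : Type*} [Field K] [CharP K 2] (a b : K) {N : ℕ}
    (hN : Even N) {P : Matrix (Fin N) (Fin N) (ZMod 2)} (hP : P * Pᵀ = 1) :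
    binSub a b P * (binSub a b P)ᵀ = (b - a) ^ 2 • (1 : Matrix (Fin N) (Fin N) K) := by
  set f := ZMod.castHom (dvd_refl 2) K
  have hM : P.map f * (P.map f)ᵀ = 1 := by
    rw [← transpose_map, ← Matrix.map_mul, hP, Matrix.map_one f (map_zero f) (map_one f)]
  have hrow (i : Fin N) : ∑ k, P.map f i k = 1 := by
    simp only [map_apply, ← map_sum, ZMod.sum_row_eq_one_of_mul_transpose_eq_one hP i, map_one]
  have hQ : binSub a b P = of fun i j => a + (b - a) * P.map f i j := by
    ext i j; exact binSub_apply a b P i j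
  have hN' : (Fintype.card (Fin N) : K) = 0 := by
    rw [Fintype.card_fin, (CharP.cast_eq_zero_iff K 2 N).mpr (even_iff_two_dvd.mp hN)]
  rw [hQ, gram_const_add_smul a (b - a) hM hrow, hN', (CharTwo.two_eq_zero : (2 : K) = 0)]
  simp

lemma isUnit_det_transpose_binSub {K : Type*} [Field K] [CharP K 2] {a b : K} (hab : a ≠ b)
    {N : ℕ} (hN : Even N) {P : Matrix (Fin N) (Fin N) (ZMod 2)} (hP : P * Pᵀ = 1) :
    IsUnit (binSub a b P)ᵀ.det := by
  have hdet : (binSub a b P).det * (binSub a b P)ᵀ.det = ((b - a) ^ 2) ^ N := by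
    rw [← det_mul, binSub_mul_transpose_self a b hN hP, det_smul, det_one, mul_one,
      Fintype.card_fin]
  have hne : ((b - a) ^ 2) ^ N ≠ 0 := pow_ne_zero _ (pow_ne_zero _ (sub_ne_zero.mpr hab.symm))
  exact isUnit_of_mul_isUnit_right (hdet ▸ hne.isUnit)

theorem stmt14_general (K : Type*) [Field K] [CharP K 2] (a b : K)
    (hab : a ≠ b)
    (N R : ℕ) (hNeven : Even N)
    (P : Matrix (Fin N) (Fin N) (ZMod 2)) (hP : P * P.transpose = 1)
    (H : Matrix (Fin R) (Fin N) (ZMod 2))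
    (hH : (H.map (ZMod.castHom (dvd_refl 2) K)).rank = R) :
    (H.map (ZMod.castHom (dvd_refl 2) K) * (binSub a b P).transpose).rank = R := by
  rw [rank_mul_eq_left_of_isUnit_det _ _ (isUnit_det_transpose_binSub hab hNeven hP), hH]

theorem stmt14 (K : Type*) [Field K] [CharP K 2] (a b : K)
    (ha : a ≠ 0) (hb : b ≠ 0) (hab : a ≠ b)
    (N R : ℕ) (hN : 0 < N) (hNeven : Even N)
    (P : Matrix (Fin N) (Fin N) (ZMod 2)) (hP : P * P.transpose = 1)
    (H : Matrix (Fin R) (Fin N) (ZMod 2))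
    (hH : (H.map (ZMod.castHom (dvd_refl 2) K)).rank = R) :
    (H.map (ZMod.castHom (dvd_refl 2) K) * (binSub a b P).transpose).rank = R :=
  stmt14_general K a b hab N R hNeven P hP H hH
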